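/- arXiv:2407.09222 — 2 statements merged into one kernel-verified Lean document; each statement's English description precedes it below -/
import Mathlib

section
/- Let d ≥ 1, T > 0 and α ∈ (0,1]. Let K ⊆ [0,T] × ℝ^d be a compact set and suppose there exist δ > 0 and C > 0 such that Leb_{ℝ^{1+d}}(B_ε(K)) ≤ C ε^{1/α + δ} for all ε ∈ (0,1]. Let X = (X_t)_{t∈[0,T]} be a stochastic process with continuous paths in ℝ^d on a probability space (Ω, ℱ, ℙ) such that: (i) almost surely the path t ↦ X_t is α-Hölder continuous; (ii) for every κ > 0 there exists M = M(κ) > 0 such that for every bounded nonnegative Borel function f on [0,T] × ℝ^d and every δ' > 0 one has ℙ(∫_0^T f(s, X_s) ds > δ') ≤ κ + (M/δ') ∫_0^T ∫_{ℝ^d} f(s,x) dx ds. Then ℙ(∃ t ∈ [0,T] : (t, X_t) ∈ K) = 0. -/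
open MeasureTheory Set
open scoped ProbabilityTheory

/-- Euclidean distance on `ℝ × ℝ^d`. -/
noncomputable def prodDist {d : ℕ} (z w : ℝ × EuclideanSpace ℝ (Fin d)) : ℝ :=
  Real.sqrt ((z.1 - w.1) ^ 2 + ‖z.2 - w.2‖ ^ 2)

/-- Open `ε`-neighbourhood of `K ⊆ ℝ^{1+d}` with respect to the Euclidean distance. -/
def eNbhd {d : ℕ} (ε : ℝ) (K : Set (ℝ × EuclideanSpace ℝ (Fin d))) :
    Set (ℝ × EuclideanSpace ℝ (Fin d)) :=
  {z | ∃ w ∈ K, prodDist z w < ε}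

/-!
If a path with Hölder constant `N` hits `K` at some time, then for every small `r > 0` it spends
time at least `r` in the neighbourhood `B_ε(K)`, `ε = 2 N r^α`. Testing the incompressibility
bound against the indicator of `B_ε(K)` at level `r / 2` bounds the probability of this event by
`κ + (2M / r) Leb(B_ε(K)) ≤ κ + 2MC ε^(1/α + δ) / r`, and `ε^(1/α) = (2N)^(1/α) r`, so the error
term is a multiple of `ε^δ`. Letting `r → 0`, then `κ → 0`, and taking the union over integer
Hölder constants gives the claim.
-/

open Filter Topology

lemma sub_le_setIntegral_indicator_comp {E : Type*} [MeasurableSpace E] {Y : ℝ → E}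
    (hY : Measurable Y) {U : Set (ℝ × E)} (hU : MeasurableSet U) {I : Set ℝ}
    (hI : volume I ≠ ⊤) {a b : ℝ} (hab : Ioc a b ⊆ I) (hYU : ∀ s ∈ Ioc a b, (s, Y s) ∈ U) :
    b - a ≤ ∫ s in I, U.indicator 1 (s, Y s) := by
  have hmeas : Measurable fun s => U.indicator (1 : ℝ × E → ℝ) (s, Y s) :=
    (measurable_const.indicator hU).comp (measurable_id.prodMk hY)
  have hint : IntegrableOn (fun s => U.indicator (1 : ℝ × E → ℝ) (s, Y s)) I :=
    (integrableOn_const (C := (1 : ℝ)) hI).mono' hmeas.aestronglyMeasurable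
      (ae_of_all _ fun s => (norm_indicator_le_norm_self 1 (s, Y s)).trans_eq norm_one)
  calc b - a ≤ volume.real (Ioc a b) := by rw [Real.volume_real_Ioc]; exact le_max_left _ _
    _ = ∫ s in Ioc a b, U.indicator 1 (s, Y s) := by
      rw [setIntegral_congr_fun measurableSet_Ioc fun s hs => indicator_of_mem (hYU s hs) _]
      simp
    _ ≤ ∫ s in I, U.indicator 1 (s, Y s) :=
      setIntegral_mono_set hint (ae_of_all _ fun s => indicator_nonneg (fun _ _ => zero_le_one) _)
        hab.eventuallyLE

lemma setIntegral_integral_indicator_le_measureReal {α β : Type*} [MeasurableSpace α]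
    [MeasurableSpace β] {μ : Measure α} {ν : Measure β} [SFinite μ] [SFinite ν]
    {U : Set (α × β)} (hU : MeasurableSet U) (hUfin : μ.prod ν U ≠ ⊤) (I : Set α) :
    ∫ s in I, ∫ x, U.indicator 1 (s, x) ∂ν ∂μ ≤ (μ.prod ν).real U := by
  have hint : Integrable (U.indicator (1 : α × β → ℝ)) (μ.prod ν) :=
    (integrable_indicator_iff hU).2 (integrableOn_const hUfin)
  calc ∫ s in I, ∫ x, U.indicator 1 (s, x) ∂ν ∂μ ≤ ∫ s, ∫ x, U.indicator 1 (s, x) ∂ν ∂μ :=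
        setIntegral_le_integral hint.integral_prod_left (ae_of_all _ fun s =>
          integral_nonneg fun x => indicator_nonneg (fun _ _ => zero_le_one) _)
    _ = (μ.prod ν).real U := by rw [← integral_prod _ hint, integral_indicator_one hU]

section Neighbourhood

variable {d : ℕ} {K : Set (ℝ × EuclideanSpace ℝ (Fin d))}

lemma isOpen_eNbhd (ε : ℝ) (K : Set (ℝ × EuclideanSpace ℝ (Fin d))) : IsOpen (eNbhd ε K) := by
  have hdist : ∀ w, Continuous fun z : ℝ × EuclideanSpace ℝ (Fin d) => prodDist z w := by
    intro w; unfold prodDist; fun_prop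
  have : eNbhd ε K = ⋃ w ∈ K, {z | prodDist z w < ε} := by ext z; simp [eNbhd]
  rw [this]
  exact isOpen_biUnion fun w _ => isOpen_lt (hdist w) continuous_const

lemma mem_eNbhd_of_le_half {ε s t : ℝ} {x y : EuclideanSpace ℝ (Fin d)} (hε : 0 < ε)
    (hK : (t, y) ∈ K) (hst : |s - t| ≤ ε / 2) (hxy : ‖x - y‖ ≤ ε / 2) :
    (s, x) ∈ eNbhd ε K := by
  refine ⟨(t, y), hK, ?_⟩
  rw [prodDist, Real.sqrt_lt' hε]
  have hs : (s - t) ^ 2 ≤ (ε / 2) ^ 2 := sq_le_sq' (abs_le.1 hst).1 (abs_le.1 hst).2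
  have hx : ‖x - y‖ ^ 2 ≤ (ε / 2) ^ 2 := pow_le_pow_left₀ (norm_nonneg _) hxy 2
  dsimp only
  nlinarith

lemma le_setIntegral_indicator_eNbhd_of_holder {Y : ℝ → EuclideanSpace ℝ (Fin d)}
    (hY : Measurable Y) {T N α r ε t : ℝ} (hα : 0 ≤ α) (hN : 0 ≤ N)
    (hHolder : ∀ s ∈ Icc 0 T, ∀ t ∈ Icc 0 T, ‖Y t - Y s‖ ≤ N * |t - s| ^ α)
    (ht : t ∈ Icc 0 T) (hK : (t, Y t) ∈ K) (hε : 0 < ε) (hrT : r ≤ T) (hrε : r ≤ ε / 2)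
    (hNr : N * r ^ α ≤ ε / 2) :
    r ≤ ∫ s in Ioc 0 T, (eNbhd ε K).indicator 1 (s, Y s) := by
  set a := min t (T - r)
  have hsub : Ioc a (a + r) ⊆ Ioc 0 T :=
    Ioc_subset_Ioc (le_min ht.1 (by linarith)) (by linarith [min_le_right t (T - r)])
  have hclose : ∀ s ∈ Ioc a (a + r), |s - t| ≤ r := by
    intro s hs
    have : t - r ≤ a := le_min (by linarith [hs.1, hs.2]) (by linarith [ht.2])
    rw [abs_sub_le_iff]
    constructor <;> linarith [min_le_left t (T - r), hs.1, hs.2]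
  have hpath : ∀ s ∈ Ioc a (a + r), (s, Y s) ∈ eNbhd ε K := by
    intro s hs
    refine mem_eNbhd_of_le_half hε hK ((hclose s hs).trans hrε) ?_
    calc ‖Y s - Y t‖ ≤ N * |s - t| ^ α := hHolder t ht s (Ioc_subset_Icc_self (hsub hs))
      _ ≤ N * r ^ α := by gcongr; exact hclose s hs
      _ ≤ ε / 2 := hNr
  simpa using sub_le_setIntegral_indicator_comp hY (isOpen_eNbhd ε K).measurableSet
    (by simp [Real.volume_Ioc]) hsub hpath

end Neighbourhood

section Incompressibility

variable {Ω : Type*} [MeasurableSpace Ω] {d : ℕ}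

/-- Condition (ii) for a fixed `κ` and `M = M(κ)`. -/
def IsIncompressibleWith (P : Measure Ω) (X : ℝ → Ω → EuclideanSpace ℝ (Fin d))
    (T κ M : ℝ) : Prop :=
  ∀ f : ℝ → EuclideanSpace ℝ (Fin d) → ℝ,
    Measurable (fun p : ℝ × EuclideanSpace ℝ (Fin d) => f p.1 p.2) →
    (∀ s x, 0 ≤ f s x) → (∃ Cf : ℝ, ∀ s x, f s x ≤ Cf) →
    ∀ δ' > (0 : ℝ),
      P {ω | δ' < ∫ s in Ioc (0 : ℝ) T, f s (X s ω)} ≤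
        ENNReal.ofReal (κ + (M / δ') * ∫ s in Ioc (0 : ℝ) T, ∫ x, f s x)

variable {P : Measure Ω} {X : ℝ → Ω → EuclideanSpace ℝ (Fin d)}

lemma IsIncompressibleWith.measure_lt_setIntegral_indicator_le {T κ M : ℝ}
    (h : IsIncompressibleWith P X T κ M) (hM : 0 ≤ M) {U : Set (ℝ × EuclideanSpace ℝ (Fin d))}
    (hU : MeasurableSet U) (hUfin : volume U ≠ ⊤) {δ' : ℝ} (hδ' : 0 < δ') :
    P {ω | δ' < ∫ s in Ioc 0 T, U.indicator 1 (s, X s ω)} ≤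
      ENNReal.ofReal (κ + M / δ' * volume.real U) := by
  have hf01 : ∀ z, U.indicator (1 : ℝ × EuclideanSpace ℝ (Fin d) → ℝ) z ∈ Icc 0 1 := by
    intro z; by_cases hz : z ∈ U <;> simp [hz]
  refine (h (fun s x => U.indicator 1 (s, x)) (measurable_const.indicator hU)
    (fun s x => (hf01 _).1) ⟨1, fun s x => (hf01 _).2⟩ δ' hδ').trans
    (ENNReal.ofReal_le_ofReal ?_)
  gcongr
  rw [Measure.volume_eq_prod] at hUfin ⊢
  exact setIntegral_integral_indicator_le_measureReal hU hUfin _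

variable {K : Set (ℝ × EuclideanSpace ℝ (Fin d))} {T α δ C N : ℝ}

lemma measure_hits_holder_le (hX : ∀ ω, Measurable (X · ω)) (hα : α ∈ Ioc 0 1) (hC : 0 ≤ C)
    (hK : ∀ ε ∈ Ioc (0 : ℝ) 1, volume (eNbhd ε K) ≤ ENNReal.ofReal (C * ε ^ (1 / α + δ)))
    {κ M : ℝ} (hinc : IsIncompressibleWith P X T κ M) (hM : 0 ≤ M) (hN : 1 ≤ N) {r : ℝ}
    (hr : r ∈ Ioc 0 1) (hrT : r ≤ T) (hε1 : 2 * N * r ^ α ≤ 1) :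
    P {ω | (∃ t ∈ Icc 0 T, (t, X t ω) ∈ K) ∧
        ∀ s ∈ Icc 0 T, ∀ t ∈ Icc 0 T, ‖X t ω - X s ω‖ ≤ N * |t - s| ^ α} ≤
      ENNReal.ofReal (κ + 2 * M * C * (2 * N) ^ (1 / α) * (2 * N * r ^ α) ^ δ) := by
  obtain ⟨hα0, hα1⟩ := hα
  set ε := 2 * N * r ^ α
  have hrα : 0 < r ^ α := Real.rpow_pos_of_pos hr.1 α
  have hε0 : 0 < ε := by positivity
  have hrε : r ≤ ε / 2 := by
    have : r ≤ r ^ α := by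
      simpa using Real.rpow_le_rpow_of_exponent_ge hr.1 hr.2 hα1
    nlinarith
  have hvol := hK ε ⟨hε0, hε1⟩
  have hεroot : ε ^ (1 / α) = (2 * N) ^ (1 / α) * r := by
    rw [Real.mul_rpow (by positivity) hrα.le, one_div, Real.rpow_rpow_inv hr.1.le hα0.ne']
  calc _ ≤ P {ω | r / 2 < ∫ s in Ioc 0 T, (eNbhd ε K).indicator 1 (s, X s ω)} := by
        refine measure_mono fun ω ⟨⟨t, ht, htK⟩, hHolder⟩ => (half_lt_self hr.1).trans_le ?_
        exact le_setIntegral_indicator_eNbhd_of_holder (hX ω) hα0.le (by linarith) hHolder ht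
          htK hε0 hrT hrε (by linarith)
    _ ≤ ENNReal.ofReal (κ + M / (r / 2) * volume.real (eNbhd ε K)) :=
        hinc.measure_lt_setIntegral_indicator_le hM (isOpen_eNbhd ε K).measurableSet
          (ne_top_of_le_ne_top ENNReal.ofReal_ne_top hvol) (by linarith [hr.1])
    _ ≤ ENNReal.ofReal (κ + M / (r / 2) * (C * ε ^ (1 / α + δ))) := by
        gcongr
        · exact div_nonneg hM (by linarith [hr.1])
        · exact ENNReal.toReal_le_of_le_ofReal (by positivity) hvol
    _ = ENNReal.ofReal (κ + 2 * M * C * (2 * N) ^ (1 / α) * ε ^ δ) := by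
        rw [Real.rpow_add hε0, hεroot]
        field_simp [hr.1.ne']

lemma measure_hits_holder_eq_zero (hX : ∀ ω, Measurable (X · ω)) (hT : 0 < T)
    (hα : α ∈ Ioc 0 1) (hδ : 0 < δ) (hC : 0 ≤ C)
    (hK : ∀ ε ∈ Ioc (0 : ℝ) 1, volume (eNbhd ε K) ≤ ENNReal.ofReal (C * ε ^ (1 / α + δ)))
    (hIncom : ∀ κ > (0 : ℝ), ∃ M > (0 : ℝ), IsIncompressibleWith P X T κ M) (hN : 1 ≤ N) :
    P {ω | (∃ t ∈ Icc 0 T, (t, X t ω) ∈ K) ∧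
        ∀ s ∈ Icc 0 T, ∀ t ∈ Icc 0 T, ‖X t ω - X s ω‖ ≤ N * |t - s| ^ α} = 0 := by
  refine le_antisymm (ENNReal.le_of_forall_pos_le_add fun κ hκ _ => ?_) bot_le
  obtain ⟨M, hM, hinc⟩ := hIncom κ hκ
  have hε : Continuous fun r : ℝ => 2 * N * r ^ α :=
    continuous_const.mul (Real.continuous_rpow_const hα.1.le)
  have hε0 : Tendsto (fun r : ℝ => 2 * N * r ^ α) (𝓝[>] 0) (𝓝 0) :=
    (hε.tendsto' 0 0 (by simp [Real.zero_rpow hα.1.ne'])).mono_left nhdsWithin_le_nhds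
  have hbound : Tendsto (fun r : ℝ => κ + 2 * M * C * (2 * N) ^ (1 / α) * (2 * N * r ^ α) ^ δ)
      (𝓝[>] 0) (𝓝 κ) := by
    simpa [Real.zero_rpow hδ.ne'] using
      (((Real.continuous_rpow_const hδ.le).tendsto 0).comp hε0).const_mul
        (2 * M * C * (2 * N) ^ (1 / α)) |>.const_add (κ : ℝ)
  have hsmall : ∀ᶠ r in 𝓝[>] (0 : ℝ), r ∈ Ioc 0 1 ∧ r ≤ T ∧ 2 * N * r ^ α ≤ 1 := by
    filter_upwards [Ioo_mem_nhdsGT (lt_min one_pos hT), hε0.eventually (ge_mem_nhds one_pos)]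
      with r hr hr1
    exact ⟨⟨hr.1, hr.2.le.trans (min_le_left _ _)⟩, hr.2.le.trans (min_le_right _ _), hr1⟩
  rw [zero_add, ← ENNReal.ofReal_coe_nnreal]
  refine ge_of_tendsto (ENNReal.tendsto_ofReal hbound) (hsmall.mono fun r ⟨hr, hrT, hε1⟩ => ?_)
  exact measure_hits_holder_le hX hα hC hK hinc hM.le hN hr hrT hε1

end Incompressibility

theorem stmt0_general
    (d : ℕ) (T : ℝ) (hT : 0 < T) (α : ℝ) (hα : α ∈ Set.Ioc (0 : ℝ) 1)
    (K : Set (ℝ × EuclideanSpace ℝ (Fin d)))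
    (δ C : ℝ) (hδ : 0 < δ) (hC : 0 < C)
    (hK : ∀ ε ∈ Set.Ioc (0 : ℝ) 1,
      volume (eNbhd ε K) ≤ ENNReal.ofReal (C * ε ^ (1 / α + δ)))
    (Ω : Type) [MeasureSpace Ω]
    (X : ℝ → Ω → EuclideanSpace ℝ (Fin d))
    (hXmeas : Measurable fun p : ℝ × Ω => X p.1 p.2)
    (hHolder : ∀ᵐ ω ∂(ℙ : Measure Ω), ∃ N : ℝ, ∀ s ∈ Set.Icc (0 : ℝ) T,
      ∀ t ∈ Set.Icc (0 : ℝ) T, ‖X t ω - X s ω‖ ≤ N * |t - s| ^ α)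
    (hIncom : ∀ κ > (0 : ℝ), ∃ M > (0 : ℝ),
      ∀ f : ℝ → EuclideanSpace ℝ (Fin d) → ℝ,
        Measurable (fun p : ℝ × EuclideanSpace ℝ (Fin d) => f p.1 p.2) →
        (∀ s x, 0 ≤ f s x) → (∃ Cf : ℝ, ∀ s x, f s x ≤ Cf) →
        ∀ δ' > (0 : ℝ),
          (ℙ : Measure Ω) {ω | δ' < ∫ s in Set.Ioc (0 : ℝ) T, f s (X s ω)} ≤
            ENNReal.ofReal (κ + (M / δ') * ∫ s in Set.Ioc (0 : ℝ) T, ∫ x, f s x)) :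
    (ℙ : Measure Ω) {ω | ∃ t ∈ Set.Icc (0 : ℝ) T, (t, X t ω) ∈ K} = 0 := by
  have hpath : ∀ ω, Measurable (X · ω) := fun ω =>
    hXmeas.comp (measurable_id.prodMk measurable_const)
  have hnull : ∀ n : ℕ, ∀ᵐ ω ∂(ℙ : Measure Ω), ¬((∃ t ∈ Icc 0 T, (t, X t ω) ∈ K) ∧
      ∀ s ∈ Icc 0 T, ∀ t ∈ Icc 0 T, ‖X t ω - X s ω‖ ≤ (n + 1 : ℕ) * |t - s| ^ α) := fun n =>
    (measure_eq_zero_iff_ae_notMem.1 <| measure_hits_holder_eq_zero hpath hT hα hδ hC.le hK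
      hIncom (by simp))
  rw [measure_eq_zero_iff_ae_notMem]
  filter_upwards [hHolder, ae_all_iff.2 hnull] with ω ⟨N, hN⟩ hω hhit
  refine hω ⌈N⌉₊ ⟨hhit, fun s hs t ht => (hN s hs t ht).trans ?_⟩
  gcongr
  exact (Nat.le_ceil N).trans (by simp)

theorem stmt0
    (d : ℕ) (hd : 1 ≤ d) (T : ℝ) (hT : 0 < T) (α : ℝ) (hα : α ∈ Set.Ioc (0 : ℝ) 1)
    (K : Set (ℝ × EuclideanSpace ℝ (Fin d))) (hKcompact : IsCompact K)
    (hKsub : K ⊆ {z | z.1 ∈ Set.Icc (0 : ℝ) T})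
    (δ C : ℝ) (hδ : 0 < δ) (hC : 0 < C)
    (hK : ∀ ε ∈ Set.Ioc (0 : ℝ) 1,
      volume (eNbhd ε K) ≤ ENNReal.ofReal (C * ε ^ (1 / α + δ)))
    (Ω : Type) [MeasureSpace Ω] [IsProbabilityMeasure (ℙ : Measure Ω)]
    (X : ℝ → Ω → EuclideanSpace ℝ (Fin d))
    (hXmeas : Measurable fun p : ℝ × Ω => X p.1 p.2)
    (hXcont : ∀ ω, ContinuousOn (fun t => X t ω) (Set.Icc 0 T))
    (hHolder : ∀ᵐ ω ∂(ℙ : Measure Ω), ∃ N : ℝ, ∀ s ∈ Set.Icc (0 : ℝ) T,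
      ∀ t ∈ Set.Icc (0 : ℝ) T, ‖X t ω - X s ω‖ ≤ N * |t - s| ^ α)
    (hIncom : ∀ κ > (0 : ℝ), ∃ M > (0 : ℝ),
      ∀ f : ℝ → EuclideanSpace ℝ (Fin d) → ℝ,
        Measurable (fun p : ℝ × EuclideanSpace ℝ (Fin d) => f p.1 p.2) →
        (∀ s x, 0 ≤ f s x) → (∃ Cf : ℝ, ∀ s x, f s x ≤ Cf) →
        ∀ δ' > (0 : ℝ),
          (ℙ : Measure Ω) {ω | δ' < ∫ s in Set.Ioc (0 : ℝ) T, f s (X s ω)} ≤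
            ENNReal.ofReal (κ + (M / δ') * ∫ s in Set.Ioc (0 : ℝ) T, ∫ x, f s x)) :
    (ℙ : Measure Ω) {ω | ∃ t ∈ Set.Icc (0 : ℝ) T, (t, X t ω) ∈ K} = 0 :=
  stmt0_general d T hT α hα K δ C hδ hC hK Ω X hXmeas hHolder hIncom
end

section
/- Let d ≥ 1 and T > 0, let S ⊆ ℝ^d be a nonempty closed set, and let h : [0,∞) → ℝ be continuous with h ≥ 0. For Y ∈ C([0,T]; ℝ^d) define p_Y(t) = ∫_0^t min(1, h( min_{r ∈ [0,s]} dist(Y_r, S) )) ds for t ∈ [0,T]. Then 0 ≤ p_Y(t) ≤ t ≤ T for all t, the function t ↦ Y(p_Y(t)) belongs to C([0,T]; ℝ^d), and the map F : C([0,T]; ℝ^d) → C([0,T]; ℝ^d) defined by F(Y)(t) = Y(p_Y(t)) is continuous with respect to the supremum metric on C([0,T]; ℝ^d). -/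
/-!
The running minimum `runMinDist S Y s` is 1-Lipschitz in the path `Y`, so for each `s` the rate
`min 1 (h (runMinDist S Y s))` depends continuously on `Y`, and it always lies in `[0, 1]`.
By dominated convergence `sup_t |p_Z t - p_Y t| ≤ ∫_0^T |rate_Z - rate_Y| → 0` as `Z → Y`,
while each `p_Y` is 1-Lipschitz in `t`; hence `(Y, t) ↦ p_Y t` is jointly continuous, and so is
`(Y, t) ↦ Y (p_Y t)` by continuity of evaluation. Since `[0, T]` is compact, joint continuity
is continuity of `F` for the supremum metric. The rate is measurable in `s` because the running
minimum is antitone.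
-/

open MeasureTheory Set

/-- The running minimum distance of the path `Y` to the set `S` over times `r ∈ [0,s]`. -/
noncomputable def runMinDist {d : ℕ} {T : ℝ} (S : Set (EuclideanSpace ℝ (Fin d)))
    (Y : C(Set.Icc (0 : ℝ) T, EuclideanSpace ℝ (Fin d))) (s : ℝ) : ℝ :=
  sInf ((fun r : Set.Icc (0 : ℝ) T => Metric.infDist (Y r) S) '' {r | (r : ℝ) ≤ s})

/-- `p_Y(t) = ∫_0^t min(1, h(min_{r ∈ [0,s]} dist(Y_r, S))) ds`. -/
noncomputable def timeChange {d : ℕ} {T : ℝ} (S : Set (EuclideanSpace ℝ (Fin d)))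
    (h : ℝ → ℝ) (Y : C(Set.Icc (0 : ℝ) T, EuclideanSpace ℝ (Fin d))) (t : ℝ) : ℝ :=
  ∫ s in (0 : ℝ)..t, min 1 (h (runMinDist S Y s))

open Filter Topology
open scoped Interval

section RunMinDist

variable {d : ℕ} {T : ℝ} {S : Set (EuclideanSpace ℝ (Fin d))}

lemma runMinDist_nonneg (Y : C(Icc (0 : ℝ) T, EuclideanSpace ℝ (Fin d))) (s : ℝ) :
    0 ≤ runMinDist S Y s :=
  Real.sInf_nonneg <| by
    rintro x ⟨r, -, rfl⟩
    exact Metric.infDist_nonneg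

lemma runMinDist_of_neg (Y : C(Icc (0 : ℝ) T, EuclideanSpace ℝ (Fin d))) {s : ℝ} (hs : s < 0) :
    runMinDist S Y s = 0 := by
  have hempty : {r : Icc (0 : ℝ) T | (r : ℝ) ≤ s} = ∅ :=
    eq_empty_of_forall_notMem fun r hr => (hs.trans_le r.2.1).not_ge hr
  rw [runMinDist, hempty, image_empty, Real.sInf_empty]

lemma runMinDist_le_add_dist (Y Z : C(Icc (0 : ℝ) T, EuclideanSpace ℝ (Fin d))) (s : ℝ) :
    runMinDist S Y s ≤ runMinDist S Z s + dist Y Z := by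
  rcases eq_empty_or_nonempty {r : Icc (0 : ℝ) T | (r : ℝ) ≤ s} with hempty | ⟨r₀, hr₀⟩
  · simp only [runMinDist, hempty, image_empty, Real.sInf_empty, zero_add, dist_nonneg]
  rw [← sub_le_iff_le_add]
  refine le_csInf ⟨_, r₀, hr₀, rfl⟩ ?_
  rintro x ⟨r, hr, rfl⟩
  rw [sub_le_iff_le_add]
  calc runMinDist S Y s
      ≤ Metric.infDist (Y r) S :=
        csInf_le ⟨0, by rintro _ ⟨_, -, rfl⟩; exact Metric.infDist_nonneg⟩ ⟨r, hr, rfl⟩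
    _ ≤ Metric.infDist (Z r) S + dist (Y r) (Z r) := Metric.infDist_le_infDist_add_dist
    _ ≤ Metric.infDist (Z r) S + dist Y Z := by gcongr; exact ContinuousMap.dist_apply_le_dist r

lemma lipschitzWith_runMinDist (s : ℝ) :
    LipschitzWith 1 fun Y : C(Icc (0 : ℝ) T, EuclideanSpace ℝ (Fin d)) => runMinDist S Y s :=
  LipschitzWith.of_le_add fun Y Z => runMinDist_le_add_dist Y Z s

lemma antitoneOn_runMinDist (hT : 0 ≤ T) (Y : C(Icc (0 : ℝ) T, EuclideanSpace ℝ (Fin d))) :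
    AntitoneOn (runMinDist S Y) (Ici 0) := fun s hs _ _ hss' =>
  csInf_le_csInf ⟨0, by rintro _ ⟨_, -, rfl⟩; exact Metric.infDist_nonneg⟩
    ⟨_, ⟨0, le_rfl, hT⟩, hs, rfl⟩ (image_mono fun _ hr => le_trans hr hss')

lemma measurable_runMinDist (hT : 0 ≤ T) (Y : C(Icc (0 : ℝ) T, EuclideanSpace ℝ (Fin d))) :
    Measurable (runMinDist S Y) := by
  have hanti : Antitone fun s => runMinDist S Y (max s 0) := fun s s' hss' =>
    antitoneOn_runMinDist hT Y (le_max_right s 0) (le_max_right s' 0) (max_le_max_right 0 hss')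
  have hindicator : runMinDist S Y = (Ici 0).indicator fun s => runMinDist S Y (max s 0) := by
    funext s
    by_cases hs : 0 ≤ s
    · rw [indicator_of_mem (show s ∈ Ici 0 from hs), max_eq_left hs]
    · rw [indicator_of_notMem (show s ∉ Ici 0 from hs), runMinDist_of_neg Y (not_le.mp hs)]
  rw [hindicator]
  exact hanti.measurable.indicator measurableSet_Ici

end RunMinDist

noncomputable def timeChangeRate {d : ℕ} {T : ℝ} (S : Set (EuclideanSpace ℝ (Fin d)))
    (h : ℝ → ℝ) (Y : C(Icc (0 : ℝ) T, EuclideanSpace ℝ (Fin d))) (s : ℝ) : ℝ :=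
  min 1 (h (runMinDist S Y s))

section TimeChange

variable {d : ℕ} {T : ℝ} {S : Set (EuclideanSpace ℝ (Fin d))} {h : ℝ → ℝ}

lemma timeChange_eq_integral_timeChangeRate (Y : C(Icc (0 : ℝ) T, EuclideanSpace ℝ (Fin d)))
    (t : ℝ) : timeChange S h Y t = ∫ s in (0 : ℝ)..t, timeChangeRate S h Y s :=
  rfl

lemma timeChangeRate_mem_Icc (hh_nonneg : ∀ r ≥ (0 : ℝ), 0 ≤ h r)
    (Y : C(Icc (0 : ℝ) T, EuclideanSpace ℝ (Fin d))) (s : ℝ) :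
    timeChangeRate S h Y s ∈ Icc 0 1 :=
  ⟨le_min zero_le_one (hh_nonneg _ (runMinDist_nonneg Y s)), min_le_left _ _⟩

lemma norm_timeChangeRate_le_one (hh_nonneg : ∀ r ≥ (0 : ℝ), 0 ≤ h r)
    (Y : C(Icc (0 : ℝ) T, EuclideanSpace ℝ (Fin d))) (s : ℝ) :
    ‖timeChangeRate S h Y s‖ ≤ 1 := by
  obtain ⟨hs₀, hs₁⟩ := timeChangeRate_mem_Icc (S := S) hh_nonneg Y s
  rwa [Real.norm_of_nonneg hs₀]

lemma continuous_timeChangeRate (hh_cont : ContinuousOn h (Ici 0)) (s : ℝ) :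
    Continuous fun Y : C(Icc (0 : ℝ) T, EuclideanSpace ℝ (Fin d)) => timeChangeRate S h Y s :=
  continuous_const.min <| hh_cont.comp_continuous (lipschitzWith_runMinDist s).continuous
    fun Y => runMinDist_nonneg Y s

lemma measurable_timeChangeRate (hT : 0 ≤ T) (hh_cont : ContinuousOn h (Ici 0))
    (Y : C(Icc (0 : ℝ) T, EuclideanSpace ℝ (Fin d))) :
    Measurable (timeChangeRate S h Y) := by
  -- `h` is only continuous on `[0, ∞)`; precomposing with `max · 0` extends it continuously.
  have hext : Continuous fun x : ℝ => min 1 (h (max x 0)) :=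
    continuous_const.min <|
      hh_cont.comp_continuous (continuous_id.max continuous_const) fun x => le_max_right x 0
  have hcomp : timeChangeRate S h Y = (fun x : ℝ => min 1 (h (max x 0))) ∘ runMinDist S Y := by
    funext s
    simp only [timeChangeRate, Function.comp_apply, max_eq_left (runMinDist_nonneg Y s)]
  rw [hcomp]
  exact hext.measurable.comp (measurable_runMinDist hT Y)

lemma intervalIntegrable_timeChangeRate (hT : 0 ≤ T) (hh_cont : ContinuousOn h (Ici 0))
    (hh_nonneg : ∀ r ≥ (0 : ℝ), 0 ≤ h r) (Y : C(Icc (0 : ℝ) T, EuclideanSpace ℝ (Fin d)))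
    (a b : ℝ) : IntervalIntegrable (timeChangeRate S h Y) volume a b := by
  exact IntervalIntegrable.mono_fun' (g := fun _ => (1 : ℝ)) intervalIntegrable_const
    (measurable_timeChangeRate hT hh_cont Y).aestronglyMeasurable
    (Eventually.of_forall (norm_timeChangeRate_le_one hh_nonneg Y))

lemma timeChange_mem_Icc (hT : 0 ≤ T) (hh_cont : ContinuousOn h (Ici 0))
    (hh_nonneg : ∀ r ≥ (0 : ℝ), 0 ≤ h r) (Y : C(Icc (0 : ℝ) T, EuclideanSpace ℝ (Fin d)))
    {t : ℝ} (ht : 0 ≤ t) : timeChange S h Y t ∈ Icc 0 t := by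
  refine ⟨intervalIntegral.integral_nonneg ht fun s _ => (timeChangeRate_mem_Icc hh_nonneg Y s).1,
    ?_⟩
  calc timeChange S h Y t
      ≤ ∫ _ in (0 : ℝ)..t, (1 : ℝ) :=
        intervalIntegral.integral_mono_on ht
          (intervalIntegrable_timeChangeRate hT hh_cont hh_nonneg Y 0 t) intervalIntegrable_const
          fun s _ => (timeChangeRate_mem_Icc hh_nonneg Y s).2
    _ = t := by simp

lemma lipschitzWith_timeChange (hT : 0 ≤ T) (hh_cont : ContinuousOn h (Ici 0))
    (hh_nonneg : ∀ r ≥ (0 : ℝ), 0 ≤ h r) (Y : C(Icc (0 : ℝ) T, EuclideanSpace ℝ (Fin d))) :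
    LipschitzWith 1 (timeChange S h Y) := by
  refine LipschitzWith.of_dist_le_mul fun t t' => ?_
  rw [Real.dist_eq, Real.dist_eq, timeChange_eq_integral_timeChangeRate,
    timeChange_eq_integral_timeChangeRate, intervalIntegral.integral_interval_sub_left
      (intervalIntegrable_timeChangeRate hT hh_cont hh_nonneg Y _ _)
      (intervalIntegrable_timeChangeRate hT hh_cont hh_nonneg Y _ _), NNReal.coe_one]
  exact intervalIntegral.norm_integral_le_of_norm_le_const fun s _ =>
    norm_timeChangeRate_le_one hh_nonneg Y s

lemma abs_timeChange_sub_le (hT : 0 ≤ T) (hh_cont : ContinuousOn h (Ici 0))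
    (hh_nonneg : ∀ r ≥ (0 : ℝ), 0 ≤ h r) (Y Z : C(Icc (0 : ℝ) T, EuclideanSpace ℝ (Fin d)))
    {t : ℝ} (ht : t ∈ Icc 0 T) :
    |timeChange S h Z t - timeChange S h Y t|
      ≤ ∫ s in (0 : ℝ)..T, |timeChangeRate S h Z s - timeChangeRate S h Y s| := by
  have hint := fun (W : C(Icc (0 : ℝ) T, EuclideanSpace ℝ (Fin d))) a b =>
    intervalIntegrable_timeChangeRate (S := S) hT hh_cont hh_nonneg W a b
  calc |timeChange S h Z t - timeChange S h Y t|
      = |∫ s in (0 : ℝ)..t, (timeChangeRate S h Z s - timeChangeRate S h Y s)| := by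
        rw [intervalIntegral.integral_sub (hint Z 0 t) (hint Y 0 t)]; rfl
    _ ≤ ∫ s in (0 : ℝ)..t, |timeChangeRate S h Z s - timeChangeRate S h Y s| :=
        intervalIntegral.abs_integral_le_integral_abs ht.1
    _ ≤ ∫ s in (0 : ℝ)..T, |timeChangeRate S h Z s - timeChangeRate S h Y s| :=
        intervalIntegral.integral_mono_interval le_rfl ht.1 ht.2
          (Eventually.of_forall fun _ => abs_nonneg _) ((hint Z 0 T).sub (hint Y 0 T)).abs

lemma tendsto_integral_abs_timeChangeRate_sub (hT : 0 ≤ T) (hh_cont : ContinuousOn h (Ici 0))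
    (hh_nonneg : ∀ r ≥ (0 : ℝ), 0 ≤ h r) (Y : C(Icc (0 : ℝ) T, EuclideanSpace ℝ (Fin d))) :
    Tendsto (fun Z => ∫ s in (0 : ℝ)..T, |timeChangeRate S h Z s - timeChangeRate S h Y s|)
      (𝓝 Y) (𝓝 0) := by
  have hcont : Continuous fun Z : C(Icc (0 : ℝ) T, EuclideanSpace ℝ (Fin d)) =>
      ∫ s in (0 : ℝ)..T, |timeChangeRate S h Z s - timeChangeRate S h Y s| := by
    refine intervalIntegral.continuous_of_dominated_interval (bound := fun _ => 1)
      (fun Z => ?_) (fun Z => Eventually.of_forall fun s _ => ?_) intervalIntegrable_const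
      (Eventually.of_forall fun s _ =>
        ((continuous_timeChangeRate hh_cont s).sub continuous_const).abs)
    · exact ((measurable_timeChangeRate hT hh_cont Z).sub
        (measurable_timeChangeRate hT hh_cont Y)).abs.aestronglyMeasurable
    · obtain ⟨hZ₀, hZ₁⟩ := timeChangeRate_mem_Icc (S := S) hh_nonneg Z s
      obtain ⟨hY₀, hY₁⟩ := timeChangeRate_mem_Icc (S := S) hh_nonneg Y s
      rw [Real.norm_eq_abs, abs_abs]
      exact abs_sub_le_of_nonneg_of_le hZ₀ hZ₁ hY₀ hY₁
  simpa using hcont.tendsto Y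

lemma continuous_timeChange_uncurry (hT : 0 ≤ T) (hh_cont : ContinuousOn h (Ici 0))
    (hh_nonneg : ∀ r ≥ (0 : ℝ), 0 ≤ h r) :
    Continuous fun q : C(Icc (0 : ℝ) T, EuclideanSpace ℝ (Fin d)) × Icc (0 : ℝ) T =>
      timeChange S h q.1 q.2 := by
  refine continuous_iff_continuousAt.2 fun ⟨Y, t⟩ => ?_
  rw [ContinuousAt, tendsto_iff_dist_tendsto_zero]
  have hbound : ∀ q : C(Icc (0 : ℝ) T, EuclideanSpace ℝ (Fin d)) × Icc (0 : ℝ) T,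
      dist (timeChange S h q.1 q.2) (timeChange S h Y t)
        ≤ (∫ s in (0 : ℝ)..T, |timeChangeRate S h q.1 s - timeChangeRate S h Y s|)
          + dist q.2 t := fun ⟨Z, t'⟩ =>
    calc dist (timeChange S h Z t') (timeChange S h Y t)
        ≤ dist (timeChange S h Z t') (timeChange S h Y t')
          + dist (timeChange S h Y t') (timeChange S h Y t) := dist_triangle _ _ _
      _ ≤ _ := add_le_add (abs_timeChange_sub_le hT hh_cont hh_nonneg Y Z t'.2)
          (by simpa [Subtype.dist_eq] using
            (lipschitzWith_timeChange hT hh_cont hh_nonneg Y).dist_le_mul t' t)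
  refine squeeze_zero (fun _ => dist_nonneg) hbound ?_
  have hrate := (tendsto_integral_abs_timeChangeRate_sub (S := S) hT hh_cont hh_nonneg Y).comp
    (continuousAt_fst (p := (Y, t)))
  have htime := tendsto_iff_dist_tendsto_zero.1 (continuousAt_snd (p := (Y, t)))
  simpa using hrate.add htime

end TimeChange

theorem stmt3_general
    (d : ℕ) (T : ℝ) (hT : 0 < T)
    (S : Set (EuclideanSpace ℝ (Fin d)))
    (h : ℝ → ℝ) (hhcont : ContinuousOn h (Set.Ici 0)) (hhnonneg : ∀ r ≥ (0 : ℝ), 0 ≤ h r) :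
    (∀ (Y : C(Set.Icc (0 : ℝ) T, EuclideanSpace ℝ (Fin d))) (t : Set.Icc (0 : ℝ) T),
        timeChange S h Y t ∈ Set.Icc 0 (t : ℝ)) ∧
    ∃ F : C(Set.Icc (0 : ℝ) T, EuclideanSpace ℝ (Fin d)) →
        C(Set.Icc (0 : ℝ) T, EuclideanSpace ℝ (Fin d)),
      (∀ (Y : C(Set.Icc (0 : ℝ) T, EuclideanSpace ℝ (Fin d))) (t : Set.Icc (0 : ℝ) T),
          F Y t = Y (Set.projIcc 0 T hT.le (timeChange S h Y t))) ∧
      Continuous F := by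
  refine ⟨fun Y t => timeChange_mem_Icc hT.le hhcont hhnonneg Y t.2.1, ?_⟩
  have hF : Continuous fun q : C(Icc (0 : ℝ) T, EuclideanSpace ℝ (Fin d)) × Icc (0 : ℝ) T =>
      q.1 (projIcc 0 T hT.le (timeChange S h q.1 q.2)) :=
    continuous_eval.comp <| continuous_fst.prodMk <|
      (continuous_projIcc (h := hT.le)).comp (continuous_timeChange_uncurry hT.le hhcont hhnonneg)
  let F (Y : C(Icc (0 : ℝ) T, EuclideanSpace ℝ (Fin d))) :
      C(Icc (0 : ℝ) T, EuclideanSpace ℝ (Fin d)) :=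
    ⟨fun t => Y (projIcc 0 T hT.le (timeChange S h Y t)), hF.comp (Continuous.prodMk_right Y)⟩
  exact ⟨F, fun _ _ => rfl, ContinuousMap.continuous_of_continuous_uncurry F hF⟩

theorem stmt3
    (d : ℕ) (hd : 1 ≤ d) (T : ℝ) (hT : 0 < T)
    (S : Set (EuclideanSpace ℝ (Fin d))) (hSne : S.Nonempty) (hScl : IsClosed S)
    (h : ℝ → ℝ) (hhcont : ContinuousOn h (Set.Ici 0)) (hhnonneg : ∀ r ≥ (0 : ℝ), 0 ≤ h r) :
    (∀ (Y : C(Set.Icc (0 : ℝ) T, EuclideanSpace ℝ (Fin d))) (t : Set.Icc (0 : ℝ) T),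
        timeChange S h Y t ∈ Set.Icc 0 (t : ℝ)) ∧
    ∃ F : C(Set.Icc (0 : ℝ) T, EuclideanSpace ℝ (Fin d)) →
        C(Set.Icc (0 : ℝ) T, EuclideanSpace ℝ (Fin d)),
      (∀ (Y : C(Set.Icc (0 : ℝ) T, EuclideanSpace ℝ (Fin d))) (t : Set.Icc (0 : ℝ) T),
          F Y t = Y (Set.projIcc 0 T hT.le (timeChange S h Y t))) ∧
      Continuous F :=
  stmt3_general d T hT S h hhcont hhnonneg
end
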